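/- Let X be a DI T0 space. Then for all x, y ∈ X, x ≪_I y if and only if x ≪ y in the specialisation poset of X (where ≪ is the usual way-below relation defined via directed sets). Consequently, X is I-continuous if and only if its specialisation poset is continuous, i.e., for every y ∈ X the set {x | x ≪ y} is directed and y is its least upper bound. -/

import Mathlib

universe u

/-- The specialisation order of a topological space: `x ≤ y` iff `x ∈ closure {y}`. -/
def sle {X : Type u} [TopologicalSpace X] (x y : X) : Prop :=
  x ∈ closure ({y} : Set X)

/-- Upper bounds with respect to the specialisation order. -/
def sUB {X : Type u} [TopologicalSpace X] (A : Set X) : Set X :=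
  {u | ∀ a ∈ A, sle a u}

/-- `s` is the least upper bound of `A` with respect to the specialisation order. -/
def sIsLUB {X : Type u} [TopologicalSpace X] (A : Set X) (s : X) : Prop :=
  s ∈ sUB A ∧ ∀ u ∈ sUB A, sle s u

/-- `x ≪_I y`: for every irreducible set `E` having a supremum above `y`,
some element of `E` is above `x`. -/
def IBelow {X : Type u} [TopologicalSpace X] (x y : X) : Prop :=
  ∀ E : Set X, IsIrreducible E → ∀ s : X, sIsLUB E s → sle y s → ∃ e ∈ E, sle x e

/-- `X` is I-continuous: for every `y`, the set `↡_I y` is irreducible with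
least upper bound `y`. -/
def IContinuous (X : Type u) [TopologicalSpace X] : Prop :=
  ∀ y : X, IsIrreducible {x | IBelow x y} ∧ sIsLUB {x | IBelow x y} y

/-- `X` is I-stable: `↟_I U` is open for every open `U`. -/
def IStable (X : Type u) [TopologicalSpace X] : Prop :=
  ∀ U : Set X, IsOpen U → IsOpen {x : X | ∃ a ∈ U, IBelow a x}

/-- `X` is sup-sober: every closed irreducible set with a supremum is the closure
of that supremum. -/
def SupSober (X : Type u) [TopologicalSpace X] : Prop :=
  ∀ F : Set X, IsClosed F → IsIrreducible F → ∀ s : X, sIsLUB F s → F = closure ({s} : Set X)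

/-- The collection σ_I: upper sets (w.r.t. specialisation) inaccessible by suprema of
irreducible sets. -/
def sigmaI (X : Type u) [TopologicalSpace X] : Set (Set X) :=
  {U | (∀ a ∈ U, ∀ b : X, sle a b → b ∈ U) ∧
       ∀ E : Set X, IsIrreducible E → ∀ s : X, sIsLUB E s → s ∈ U → (U ∩ E).Nonempty}

/-- The irreducibly derived topology τ_SI: open sets inaccessible by suprema of
irreducible sets. -/
def tauSI (X : Type u) [TopologicalSpace X] : Set (Set X) :=
  {U | IsOpen U ∧ ∀ E : Set X, IsIrreducible E → ∀ s : X, sIsLUB E s → s ∈ U → (E ∩ U).Nonempty}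

/-- The net `x` I-converges to `y`: there is an irreducible set `E` with a supremum above `y`,
all of whose elements are eventual lower bounds of the net. -/
def IConv {X : Type u} [TopologicalSpace X] {ι : Type u} [Preorder ι]
    (x : ι → X) (y : X) : Prop :=
  ∃ E : Set X, IsIrreducible E ∧
    (∀ e ∈ E, ∃ i₀ : ι, ∀ i : ι, i₀ ≤ i → sle e (x i)) ∧
    ∃ s : X, sIsLUB E s ∧ sle y s

/-- `D` is directed with respect to the specialisation order. -/
def sDirectedOn {X : Type u} [TopologicalSpace X] (D : Set X) : Prop :=
  ∀ a ∈ D, ∀ b ∈ D, ∃ c ∈ D, sle a c ∧ sle b c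

/-- Way-below in the specialisation poset, via nonempty directed sets. -/
def sWayBelow {X : Type u} [TopologicalSpace X] (x y : X) : Prop :=
  ∀ D : Set X, D.Nonempty → sDirectedOn D → ∀ s : X, sIsLUB D s → sle y s → ∃ d ∈ D, sle x d

/-- `X` is a DI space: the supremum of any irreducible set is also attained as the supremum
of a nonempty directed subset of its lower closure. -/
def DISpace (X : Type u) [TopologicalSpace X] : Prop :=
  ∀ E : Set X, IsIrreducible E → ∀ s : X, sIsLUB E s →
    ∃ D : Set X, D.Nonempty ∧ sDirectedOn D ∧ (∀ d ∈ D, ∃ e ∈ E, sle d e) ∧ sIsLUB D s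

/-- `U` is τ_I-open: every net that I-converges to a point of `U` is eventually in `U`. -/
def TauIOpen {X : Type u} [TopologicalSpace X] (U : Set X) : Prop :=
  ∀ (ι : Type u) [Preorder ι] [Nonempty ι],
    (∀ i j : ι, ∃ k : ι, i ≤ k ∧ j ≤ k) →
    ∀ x : ι → X, ∀ y ∈ U, IConv x y →
    ∃ i₀ : ι, ∀ i : ι, i₀ ≤ i → x i ∈ U

/-!
Every nonempty directed set is irreducible, so `x ≪_I y` always implies `x ≪ y`. In a DI space
the supremum of an irreducible set `E` is also the supremum of a directed set `D ⊆ ↓E`, so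
testing `x ≪ y` on `D` gives an element of `E` above `x`: the two relations coincide.
For continuity, a directed `↡ y` is irreducible; conversely, if `↡ y` is irreducible with
supremum `y`, the DI property gives a directed `D ⊆ ↓(↡ y) = ↡ y` with supremum `y`, and two
elements way below `y` are dominated by elements of `D`, hence by a common one.
-/

section Specialisation

variable {X : Type u} [TopologicalSpace X]

theorem sle_iff_specializes {x y : X} : sle x y ↔ y ⤳ x :=
  specializes_iff_mem_closure.symm

theorem sle_refl (x : X) : sle x x :=
  sle_iff_specializes.2 (specializes_refl x)

theorem sle_trans {x y z : X} (hxy : sle x y) (hyz : sle y z) : sle x z :=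
  sle_iff_specializes.2 ((sle_iff_specializes.1 hyz).trans (sle_iff_specializes.1 hxy))

theorem IsOpen.mem_of_sle {U : Set X} (hU : IsOpen U) {x y : X} (hx : x ∈ U) (hxy : sle x y) :
    y ∈ U :=
  (sle_iff_specializes.1 hxy).mem_open hU hx

theorem sDirectedOn.isIrreducible {D : Set X} (hne : D.Nonempty) (hD : sDirectedOn D) :
    IsIrreducible D := by
  refine ⟨hne, fun U V hU hV ⟨a, haD, haU⟩ ⟨b, hbD, hbV⟩ => ?_⟩
  obtain ⟨c, hcD, hac, hbc⟩ := hD a haD b hbD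
  exact ⟨c, hcD, hU.mem_of_sle haU hac, hV.mem_of_sle hbV hbc⟩

theorem sWayBelow.of_sle_left {x x' y : X} (hx : sle x' x) (h : sWayBelow x y) :
    sWayBelow x' y := by
  intro D hne hD s hs hys
  obtain ⟨d, hdD, hxd⟩ := h D hne hD s hs hys
  exact ⟨d, hdD, sle_trans hx hxd⟩

theorem IBelow.sWayBelow {x y : X} (h : IBelow x y) : sWayBelow x y :=
  fun D hne hD s hs hys => h D (hD.isIrreducible hne) s hs hys

end Specialisation

namespace DISpace

variable {X : Type u} [TopologicalSpace X]

theorem iBelow_of_sWayBelow (hDI : DISpace X) {x y : X} (h : sWayBelow x y) : IBelow x y := by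
  intro E hE s hs hys
  obtain ⟨D, hne, hD, hDE, hDs⟩ := hDI E hE s hs
  obtain ⟨d, hdD, hxd⟩ := h D hne hD s hDs hys
  obtain ⟨e, heE, hde⟩ := hDE d hdD
  exact ⟨e, heE, sle_trans hxd hde⟩

theorem iBelow_iff_sWayBelow (hDI : DISpace X) {x y : X} : IBelow x y ↔ sWayBelow x y :=
  ⟨IBelow.sWayBelow, hDI.iBelow_of_sWayBelow⟩

theorem sDirectedOn_sWayBelow (hDI : DISpace X) {y : X}
    (hirr : IsIrreducible {x | sWayBelow x y}) (hlub : sIsLUB {x | sWayBelow x y} y) :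
    sDirectedOn {x | sWayBelow x y} := by
  intro a ha b hb
  obtain ⟨D, hne, hD, hDsub, hDlub⟩ := hDI _ hirr y hlub
  obtain ⟨d₁, hd₁, had₁⟩ := ha D hne hD y hDlub (sle_refl y)
  obtain ⟨d₂, hd₂, hbd₂⟩ := hb D hne hD y hDlub (sle_refl y)
  obtain ⟨c, hcD, hd₁c, hd₂c⟩ := hD d₁ hd₁ d₂ hd₂
  obtain ⟨e, he, hce⟩ := hDsub c hcD
  exact ⟨c, sWayBelow.of_sle_left hce he, sle_trans had₁ hd₁c, sle_trans hbd₂ hd₂c⟩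

end DISpace

theorem stmt19_general {X : Type u} [TopologicalSpace X] (hDI : DISpace X) :
    (∀ x y : X, IBelow x y ↔ sWayBelow x y) ∧
    (IContinuous X ↔
      ∀ y : X, ({x : X | sWayBelow x y}.Nonempty ∧ sDirectedOn {x : X | sWayBelow x y}) ∧
        sIsLUB {x : X | sWayBelow x y} y) := by
  have hset (y : X) : {x | IBelow x y} = {x | sWayBelow x y} :=
    Set.ext fun _ => hDI.iBelow_iff_sWayBelow
  refine ⟨fun _ _ => hDI.iBelow_iff_sWayBelow, ?_⟩
  simp only [IContinuous, hset]
  refine forall_congr' fun y => ⟨?_, ?_⟩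
  · rintro ⟨hirr, hlub⟩
    exact ⟨⟨hirr.nonempty, hDI.sDirectedOn_sWayBelow hirr hlub⟩, hlub⟩
  · rintro ⟨⟨hne, hD⟩, hlub⟩
    exact ⟨hD.isIrreducible hne, hlub⟩

/-- In a DI T0 space, `≪_I` coincides with the way-below relation of the specialisation
poset; consequently `X` is I-continuous iff its specialisation poset is continuous. -/
theorem stmt19 {X : Type u} [TopologicalSpace X] [T0Space X] (hDI : DISpace X) :
    (∀ x y : X, IBelow x y ↔ sWayBelow x y) ∧
    (IContinuous X ↔
      ∀ y : X, ({x : X | sWayBelow x y}.Nonempty ∧ sDirectedOn {x : X | sWayBelow x y}) ∧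
        sIsLUB {x : X | sWayBelow x y} y) :=
  stmt19_general hDI
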